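/- Let 𝔙 be a regular vessel. Then for every n ≥ 0, the moments of 𝔙 satisfy on Ω the recurrence σ1⁻¹ σ2 H_{n+1} − H_{n+1} σ2 σ1⁻¹ = ∂_x H_n − σ1⁻¹ γ_* H_n + H_n γ σ1⁻¹. -/

import Mathlib

noncomputable section

open ContinuousLinearMap

/-- The coefficient space `ℂ^d`. -/
abbrev Ed (d : ℕ) : Type := EuclideanSpace ℂ (Fin d)

/-- A `d × d` complex matrix viewed as a continuous linear map on `ℂ^d`. -/
def m2c {d : ℕ} (σ : Matrix (Fin d) (Fin d) ℂ) : Ed d →L[ℂ] Ed d :=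
  Matrix.toEuclideanCLM (𝕜 := ℂ) σ

/-- A continuous linear map on `ℂ^d` viewed as a `d × d` complex matrix. -/
def c2m {d : ℕ} (T : Ed d →L[ℂ] Ed d) : Matrix (Fin d) (Fin d) ℂ :=
  (Matrix.toEuclideanCLM (𝕜 := ℂ)).symm T

/-- Partial derivative in the first (space) variable. -/
def pdx {M : Type*} [NormedAddCommGroup M] [NormedSpace ℝ M]
    (F : ℝ × ℝ → M) (p : ℝ × ℝ) : M :=
  deriv (fun x => F (x, p.2)) p.1

/-- Partial derivative in the second (time) variable. -/
def pdt {M : Type*} [NormedAddCommGroup M] [NormedSpace ℝ M]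
    (F : ℝ × ℝ → M) (p : ℝ × ℝ) : M :=
  deriv (fun t => F (p.1, t)) p.2

/-- Entrywise partial derivative in `x` of a matrix-valued function. -/
def pdxM {d : ℕ} (F : ℝ × ℝ → Matrix (Fin d) (Fin d) ℂ) (p : ℝ × ℝ) :
    Matrix (Fin d) (Fin d) ℂ :=
  Matrix.of fun i j => pdx (fun q => F q i j) p

/-- Entrywise partial derivative in `t` of a matrix-valued function. -/
def pdtM {d : ℕ} (F : ℝ × ℝ → Matrix (Fin d) (Fin d) ℂ) (p : ℝ × ℝ) :
    Matrix (Fin d) (Fin d) ℂ :=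
  Matrix.of fun i j => pdt (fun q => F q i j) p

/-- A regular vessel with inner (Krein/Hilbert) space `K` and coefficient space `ℂ^d`. -/
structure Vessel (K : Type*) [NormedAddCommGroup K] [InnerProductSpace ℂ K]
    [CompleteSpace K] (d : ℕ) where
  Ω : Set (ℝ × ℝ)
  hΩ : IsOpen Ω
  A : K →L[ℂ] K
  Aζ : K →L[ℂ] K
  B : ℝ × ℝ → Ed d →L[ℂ] K
  C : ℝ × ℝ → K →L[ℂ] Ed d
  X : ℝ × ℝ → K →L[ℂ] K
  /-- pointwise inverse of `X` -/
  Xi : ℝ × ℝ → K →L[ℂ] K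
  σ1 : Matrix (Fin d) (Fin d) ℂ
  σ2 : Matrix (Fin d) (Fin d) ℂ
  γ : Matrix (Fin d) (Fin d) ℂ
  γs : ℝ × ℝ → Matrix (Fin d) (Fin d) ℂ
  hσ1 : IsUnit σ1
  smoothB : ContDiffOn ℝ 2 B Ω
  smoothC : ContDiffOn ℝ 2 C Ω
  smoothX : ContDiffOn ℝ 2 X Ω
  hXinv : ∀ p ∈ Ω, X p ∘L Xi p = (1 : K →L[ℂ] K) ∧ Xi p ∘L X p = (1 : K →L[ℂ] K)
  eqBx : ∀ p ∈ Ω,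
    pdx B p ∘L m2c σ1 + A ∘L B p ∘L m2c σ2 + B p ∘L m2c γ = 0
  eqBt : ∀ p ∈ Ω, pdt B p = Complex.I • (A ∘L pdx B p)
  eqCx : ∀ p ∈ Ω,
    m2c σ1 ∘L pdx C p + m2c σ2 ∘L C p ∘L Aζ - m2c γ ∘L C p = 0
  eqCt : ∀ p ∈ Ω, pdt C p = (-Complex.I) • (pdx C p ∘L Aζ)
  eqXx : ∀ p ∈ Ω, pdx X p = B p ∘L m2c σ2 ∘L C p
  eqXt : ∀ p ∈ Ω, pdt X p =
    Complex.I • (A ∘L B p ∘L m2c σ2 ∘L C p) -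
      Complex.I • (B p ∘L m2c σ2 ∘L C p ∘L Aζ) +
      Complex.I • (B p ∘L m2c γ ∘L C p)
  eqLyap : ∀ p ∈ Ω, A ∘L X p + X p ∘L Aζ + B p ∘L m2c σ1 ∘L C p = 0
  eqLink : ∀ p ∈ Ω, γs p =
    γ + σ2 * c2m (C p ∘L Xi p ∘L B p) * σ1 - σ1 * c2m (C p ∘L Xi p ∘L B p) * σ2

/-- The `n`-th moment `H_n = C 𝕏⁻¹ Aⁿ B` of a vessel, as a `d × d` matrix. -/
def Vessel.H {K : Type*} [NormedAddCommGroup K] [InnerProductSpace ℂ K]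
    [CompleteSpace K] {d : ℕ} (V : Vessel K d) (n : ℕ) (p : ℝ × ℝ) :
    Matrix (Fin d) (Fin d) ℂ :=
  c2m (V.C p ∘L V.Xi p ∘L (V.A ^ n) ∘L V.B p)

open ContinuousLinearMap Filter Topology

/-!
Differentiate `H_n = C 𝕏⁻¹ Aⁿ B` in `x` by the product rule, with `∂ₓ(𝕏⁻¹) = -𝕏⁻¹ (∂ₓ𝕏) 𝕏⁻¹`,
and sandwich the result between two copies of `σ1`. The vessel equations then eliminate
`σ1 ∂ₓC`, `(∂ₓB) σ1` and `∂ₓ𝕏 = B σ2 C`, and the Lyapunov equation turns `Aζ 𝕏⁻¹` into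
`-𝕏⁻¹ A - 𝕏⁻¹ B σ1 C 𝕏⁻¹`. Everything left is linear in `H_n` and `H_{n+1}` except
`(σ2 H_0 σ1 - σ1 H_0 σ2) H_n σ1`, which the linkage condition absorbs into `γ_* H_n σ1`.
-/

theorem HasDerivAt.clm_comp_of_tower {𝕜 𝕜' : Type*} [NontriviallyNormedField 𝕜]
    [NontriviallyNormedField 𝕜'] [NormedAlgebra 𝕜 𝕜'] {E F G : Type*}
    [NormedAddCommGroup E] [NormedSpace 𝕜' E]
    [NormedAddCommGroup F] [NormedSpace 𝕜 F] [NormedSpace 𝕜' F] [IsScalarTower 𝕜 𝕜' F]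
    [NormedAddCommGroup G] [NormedSpace 𝕜 G] [NormedSpace 𝕜' G] [IsScalarTower 𝕜 𝕜' G]
    {c : 𝕜 → F →L[𝕜'] G} {c' : F →L[𝕜'] G} {d : 𝕜 → E →L[𝕜'] F} {d' : E →L[𝕜'] F} {x : 𝕜}
    (hc : HasDerivAt c c' x) (hd : HasDerivAt d d' x) :
    HasDerivAt (fun y => (c y).comp (d y)) (c'.comp (d x) + (c x).comp d') x := by
  simpa [add_comm] using ((compL 𝕜' E F G).bilinearRestrictScalars 𝕜).hasDerivAt_of_bilinear
    (fun _ => hc) (fun _ => hd)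

theorem HasDerivAt.of_eventually_inverse {𝕜 R : Type*} [NontriviallyNormedField 𝕜]
    [NormedRing R] [HasSummableGeomSeries R] [NormedAlgebra 𝕜 R] {f g : 𝕜 → R} {f' : R} {x : 𝕜}
    (hf : HasDerivAt f f' x) (hfg : ∀ᶠ y in 𝓝 x, f y * g y = 1 ∧ g y * f y = 1) :
    HasDerivAt g (-(g x * f' * g x)) x := by
  have hg : g =ᶠ[𝓝 x] fun y => Ring.inverse (f y) := by
    filter_upwards [hfg] with y hy
    exact (Ring.inverse_unit ⟨f y, g y, hy.1, hy.2⟩).symm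
  let u : Rˣ := ⟨f x, g x, hfg.self_of_nhds.1, hfg.self_of_nhds.2⟩
  have h := (hasFDerivAt_ringInverse (𝕜 := 𝕜) u).comp_hasDerivAt x hf
  simp only [neg_apply, mulLeftRight_apply] at h
  exact (h.congr_of_eventuallyEq hg).congr_deriv (by simp [u])

theorem ContDiffOn.hasDerivAt_pdx {M : Type*} [NormedAddCommGroup M] [NormedSpace ℝ M]
    {F : ℝ × ℝ → M} {s : Set (ℝ × ℝ)} {p : ℝ × ℝ} {n : WithTop ℕ∞} (hF : ContDiffOn ℝ n F s)
    (hn : n ≠ 0) (hs : s ∈ 𝓝 p) :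
    HasDerivAt (fun x => F (x, p.2)) (pdx F p) p.1 :=
  (((hF.differentiableOn hn).differentiableAt hs).comp p.1
    (hasDerivAt_id p.1 |>.prodMk (hasDerivAt_const p.1 p.2)).differentiableAt).hasDerivAt

theorem c2m_comp {d : ℕ} (S T : Ed d →L[ℂ] Ed d) : c2m (S ∘L T) = c2m S * c2m T :=
  map_mul _ S T

theorem c2m_m2c {d : ℕ} (σ : Matrix (Fin d) (Fin d) ℂ) : c2m (m2c σ) = σ :=
  StarAlgEquiv.symm_apply_apply _ _

theorem c2m_add {d : ℕ} (S T : Ed d →L[ℂ] Ed d) : c2m (S + T) = c2m S + c2m T :=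
  map_add _ S T

theorem c2m_sub {d : ℕ} (S T : Ed d →L[ℂ] Ed d) : c2m (S - T) = c2m S - c2m T :=
  map_sub _ S T

theorem pdxM_c2m_of_hasDerivAt {d : ℕ} {T : ℝ × ℝ → Ed d →L[ℂ] Ed d} {T' : Ed d →L[ℂ] Ed d}
    {p : ℝ × ℝ} (hT : HasDerivAt (fun x => T (x, p.2)) T' p.1) :
    pdxM (fun q => c2m (T q)) p = c2m T' := by
  ext i j
  let entry : (Ed d →L[ℂ] Ed d) →L[ℂ] ℂ := LinearMap.toContinuousLinearMap
    (Matrix.entryLinearMap ℂ ℂ i j ∘ₗ (Matrix.toEuclideanCLM (𝕜 := ℂ)).symm.toAlgEquiv.toLinearMap)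
  exact ((entry.restrictScalars ℝ).hasFDerivAt.comp_hasDerivAt p.1 hT).deriv

namespace Vessel

variable {K : Type*} [NormedAddCommGroup K] [InnerProductSpace ℂ K] [CompleteSpace K] {d : ℕ}
  (V : Vessel K d) {p : ℝ × ℝ}

def momentOp (n : ℕ) (p : ℝ × ℝ) : Ed d →L[ℂ] Ed d :=
  V.C p ∘L V.Xi p ∘L (V.A ^ n) ∘L V.B p

theorem H_eq_c2m_momentOp (n : ℕ) (p : ℝ × ℝ) : V.H n p = c2m (V.momentOp n p) := rfl

theorem gammaStar_eq (hp : p ∈ V.Ω) :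
    V.γs p = V.γ + V.σ2 * V.H 0 p * V.σ1 - V.σ1 * V.H 0 p * V.σ2 := by
  rw [V.eqLink p hp, Vessel.H, pow_zero, one_def, id_comp]

theorem X_Xi_apply (hp : p ∈ V.Ω) (w : K) : V.X p (V.Xi p w) = w :=
  congr($((V.hXinv p hp).1) w)

theorem Xi_X_apply (hp : p ∈ V.Ω) (w : K) : V.Xi p (V.X p w) = w :=
  congr($((V.hXinv p hp).2) w)

theorem sigma1_pdx_C_apply (hp : p ∈ V.Ω) (w : K) :
    m2c V.σ1 (pdx V.C p w) = m2c V.γ (V.C p w) - m2c V.σ2 (V.C p (V.Aζ w)) := by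
  have h := congr($(V.eqCx p hp) w)
  simp only [add_apply, sub_apply, comp_apply, zero_apply] at h
  rw [eq_sub_iff_add_eq, ← sub_eq_zero, ← h]

theorem pdx_B_sigma1_apply (hp : p ∈ V.Ω) (u : Ed d) :
    pdx V.B p (m2c V.σ1 u) = -V.A (V.B p (m2c V.σ2 u)) - V.B p (m2c V.γ u) := by
  have h := congr($(V.eqBx p hp) u)
  simp only [add_apply, comp_apply, zero_apply] at h
  rw [← sub_eq_zero, ← h]
  abel

theorem pdx_X_apply (hp : p ∈ V.Ω) (w : K) : pdx V.X p w = V.B p (m2c V.σ2 (V.C p w)) := by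
  rw [V.eqXx p hp]
  rfl

theorem Aζ_Xi_apply (hp : p ∈ V.Ω) (w : K) :
    V.Aζ (V.Xi p w) = -V.Xi p (V.A w) - V.Xi p (V.B p (m2c V.σ1 (V.C p (V.Xi p w)))) := by
  have h := congr($(V.eqLyap p hp) (V.Xi p w))
  simp only [add_apply, comp_apply, zero_apply, V.X_Xi_apply hp] at h
  rw [← V.Xi_X_apply hp (V.Aζ _), ← map_neg, ← map_sub]
  congr 1
  rw [← sub_eq_zero, ← h]
  abel

theorem hasDerivAt_momentOp (n : ℕ) (hp : p ∈ V.Ω) :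
    HasDerivAt (fun x => V.momentOp n (x, p.2))
      (pdx V.C p ∘L V.Xi p ∘L (V.A ^ n) ∘L V.B p
        - V.C p ∘L V.Xi p ∘L pdx V.X p ∘L V.Xi p ∘L (V.A ^ n) ∘L V.B p
        + V.C p ∘L V.Xi p ∘L (V.A ^ n) ∘L pdx V.B p) p.1 := by
  have hline : ∀ᶠ x in 𝓝 p.1, (x, p.2) ∈ V.Ω :=
    (continuous_id.prodMk continuous_const).continuousAt.preimage_mem_nhds (V.hΩ.mem_nhds hp)
  have hB := V.smoothB.hasDerivAt_pdx two_ne_zero (V.hΩ.mem_nhds hp)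
  have hC := V.smoothC.hasDerivAt_pdx two_ne_zero (V.hΩ.mem_nhds hp)
  have hX := V.smoothX.hasDerivAt_pdx two_ne_zero (V.hΩ.mem_nhds hp)
  have hXi : HasDerivAt (fun x => V.Xi (x, p.2)) (-(V.Xi p * pdx V.X p * V.Xi p)) p.1 :=
    hX.of_eventually_inverse (hline.mono fun x hx => V.hXinv _ hx)
  refine (hC.clm_comp_of_tower (hXi.clm_comp_of_tower
    ((hasDerivAt_const p.1 (V.A ^ n)).clm_comp_of_tower hB))).congr_deriv ?_
  simp only [Prod.mk.eta, zero_comp, zero_add, neg_comp, comp_add, comp_neg, mul_def, comp_assoc]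
  abel

theorem sigma1_comp_momentOp_deriv_comp_sigma1 (n : ℕ) (hp : p ∈ V.Ω) :
    m2c V.σ1 ∘L (pdx V.C p ∘L V.Xi p ∘L (V.A ^ n) ∘L V.B p
        - V.C p ∘L V.Xi p ∘L pdx V.X p ∘L V.Xi p ∘L (V.A ^ n) ∘L V.B p
        + V.C p ∘L V.Xi p ∘L (V.A ^ n) ∘L pdx V.B p) ∘L m2c V.σ1 =
      (m2c V.γ + m2c V.σ2 ∘L V.momentOp 0 p ∘L m2c V.σ1
          - m2c V.σ1 ∘L V.momentOp 0 p ∘L m2c V.σ2) ∘L V.momentOp n p ∘L m2c V.σ1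
        + m2c V.σ2 ∘L V.momentOp (n + 1) p ∘L m2c V.σ1
        - m2c V.σ1 ∘L V.momentOp (n + 1) p ∘L m2c V.σ2
        - m2c V.σ1 ∘L V.momentOp n p ∘L m2c V.γ := by
  have hA : ∀ y, V.A ((V.A ^ n) y) = (V.A ^ n) (V.A y) := fun y =>
    congr($((Commute.self_pow V.A n).eq) y)
  refine ContinuousLinearMap.ext fun v => ?_
  simp only [momentOp, add_apply, sub_apply, comp_apply, V.sigma1_pdx_C_apply hp,
    V.pdx_B_sigma1_apply hp, V.pdx_X_apply hp, V.Aζ_Xi_apply hp, hA, map_add, map_sub, map_neg,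
    pow_zero, one_apply_eq_self, pow_succ, mul_apply_eq_comp]
  abel

theorem sigma1_mul_pdxM_H_mul_sigma1 (n : ℕ) (hp : p ∈ V.Ω) :
    V.σ1 * pdxM (V.H n) p * V.σ1 =
      V.γs p * V.H n p * V.σ1 + V.σ2 * V.H (n + 1) p * V.σ1
        - V.σ1 * V.H (n + 1) p * V.σ2 - V.σ1 * V.H n p * V.γ := by
  have h := congr_arg c2m (V.sigma1_comp_momentOp_deriv_comp_sigma1 n hp)
  rw [show V.H n = fun q => c2m (V.momentOp n q) from rfl,
    pdxM_c2m_of_hasDerivAt (V.hasDerivAt_momentOp n hp), V.gammaStar_eq hp]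
  simp only [c2m_comp, c2m_add, c2m_sub, c2m_m2c, ← H_eq_c2m_momentOp] at h ⊢
  simpa only [mul_assoc, add_mul, sub_mul] using h

end Vessel

/-- the moment recurrence in `x`. -/
theorem moment_recurrence_x {K : Type*} [NormedAddCommGroup K]
    [InnerProductSpace ℂ K] [CompleteSpace K] {d : ℕ} (V : Vessel K d) :
    ∀ n : ℕ, ∀ p ∈ V.Ω,
      V.σ1⁻¹ * V.σ2 * V.H (n + 1) p - V.H (n + 1) p * V.σ2 * V.σ1⁻¹ =
        pdxM (V.H n) p - V.σ1⁻¹ * V.γs p * V.H n p + V.H n p * V.γ * V.σ1⁻¹ := by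
  intro n p hp
  have hσ1 : IsUnit V.σ1.det := (Matrix.isUnit_iff_isUnit_det _).mp V.hσ1
  have hpdx : pdxM (V.H n) p = V.σ1⁻¹ * (V.σ1 * pdxM (V.H n) p * V.σ1) * V.σ1⁻¹ := by
    simp only [mul_assoc, Matrix.nonsing_inv_mul_cancel_left _ _ hσ1, Matrix.mul_nonsing_inv _ hσ1,
      mul_one]
  rw [hpdx, V.sigma1_mul_pdxM_H_mul_sigma1 n hp]
  simp only [mul_add, add_mul, mul_sub, sub_mul, mul_assoc,
    Matrix.nonsing_inv_mul_cancel_left _ _ hσ1, Matrix.mul_nonsing_inv _ hσ1, mul_one]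
  abel
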